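/- Let Ω be the set of ordinals ≤ ω₁ with τ₁ the order topology and τ₂ the discrete topology. Then the subspace Ω₀ = Ω \ {ω₁} = [0, ω₁) is not 12-weakly Lindelöf, i.e., there is a τ₁-open cover of Ω₀ admitting no countable subfamily whose union is τ₂-dense in Ω₀; consequently the ij-weakly Lindelöf property is not hereditary. -/

import Mathlib

open Set Ordinal Topology

/-- `X` with topologies `t1`, `t2` is ij-weakly Lindelöf. -/
def IjWeaklyLindelof {X : Type*} (t1 t2 : TopologicalSpace X) : Prop :=
  ∀ {ι : Type} (U : ι → Set X), (∀ a, IsOpen[t1] (U a)) → (⋃ a, U a) = Set.univ →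
    ∃ s : Set ι, s.Countable ∧ @closure X t2 (⋃ a ∈ s, U a) = Set.univ

/-- The set of ordinals `≤ ω₁`. -/
abbrev Omega : Type _ := {o : Ordinal // o ≤ ω_ 1}

/-- `Ω₀ = Ω \ {ω₁} = [0, ω₁)`. -/
def Omega0 : Set Omega := {x : Omega | (x : Ordinal) ≠ ω_ 1}

/-- The order topology on `Ω`. -/
noncomputable def tau1 : TopologicalSpace Omega := Preorder.topology Omega

/-- The discrete topology on `Ω`. -/
def tau2 : TopologicalSpace Omega := ⊥

/-! Since `τ₂` is discrete, a countable subfamily with `τ₂`-dense union is a countable subcover.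
The initial segments `[0, α)`, `α < ω₁`, cover `[0, ω₁)`, but countably many of them are all
bounded by one countable ordinal, because `ω₁` has uncountable cofinality. -/

theorem IjWeaklyLindelof.exists_countable_subcover {X : Type*} {t₁ t₂ : TopologicalSpace X}
    (h : IjWeaklyLindelof t₁ t₂) (hd : @DiscreteTopology X t₂) {ι : Type} (U : ι → Set X)
    (hU : ∀ i, IsOpen[t₁] (U i)) (hcover : ⋃ i, U i = Set.univ) :
    ∃ s : Set ι, s.Countable ∧ ⋃ i ∈ s, U i = Set.univ := by
  obtain ⟨s, hs, hdense⟩ := h U hU hcover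
  exact ⟨s, hs, by rwa [@closure_discrete X t₂ hd] at hdense⟩

theorem Ordinal.exists_cofinal_omega_one :
    ∃ (ι : Type) (b : ι → Ordinal.{u}), (∀ i, b i < ω₁) ∧ ∀ x < ω₁, ∃ i, x < b i := by
  refine ⟨(ω₁ : Ordinal.{0}).ToType, fun i => lift.{u} (ToType.mk.symm i : Ordinal.{0}),
    fun i => lift_lt_omega_one.2 (ToType.mk.symm i).2, fun x hx => ?_⟩
  obtain ⟨y, rfl⟩ := mem_range_lift_of_le.{0, u} (hx.le.trans (lift_eq_omega_one.2 rfl).ge)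
  have hy : y + 1 < ω₁ := (Cardinal.isSuccLimit_omega 1).add_one_lt (lift_lt_omega_one.1 hx)
  exact ⟨ToType.mk ⟨y + 1, hy⟩, by simp⟩

theorem Ordinal.exists_lt_omega_one_forall_le {ι : Type*} {s : Set ι} (hs : s.Countable)
    (b : ι → Ordinal) (hb : ∀ i, b i < ω₁) : ∃ x < ω₁, ∀ i ∈ s, b i ≤ x := by
  have := hs.to_subtype
  exact ⟨⨆ i : s, b i, iSup_lt_omega_one fun i => hb i,
    fun i hi => Ordinal.le_iSup (fun i : s => b i) ⟨i, hi⟩⟩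

theorem discreteTopology_induced_tau2 : @DiscreteTopology Omega0 (tau2.induced Subtype.val) := by
  let := tau2
  have : DiscreteTopology Omega := ⟨rfl⟩
  infer_instance

theorem isOpen_induced_tau1_Iio (c : Omega) :
    IsOpen[tau1.induced (Subtype.val : Omega0 → Omega)] (Subtype.val ⁻¹' Iio c) := by
  let := tau1
  have : OrderTopology Omega := ⟨rfl⟩
  exact isOpen_induced isOpen_Iio

theorem stmt17 :
    ¬ IjWeaklyLindelof (tau1.induced (Subtype.val : Omega0 → Omega))
        (tau2.induced (Subtype.val : Omega0 → Omega)) := by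
  intro h
  obtain ⟨ι, b, hb, hb_cofinal⟩ := Ordinal.exists_cofinal_omega_one
  let U : ι → Set Omega0 := fun i => Subtype.val ⁻¹' Iio ⟨b i, (hb i).le⟩
  have hcover : ⋃ i, U i = Set.univ := eq_univ_of_forall fun x =>
    mem_iUnion.2 (hb_cofinal x.1.1 (x.1.2.lt_of_ne x.2))
  obtain ⟨s, hs, hs_cover⟩ := h.exists_countable_subcover discreteTopology_induced_tau2 U
    (fun i => isOpen_induced_tau1_Iio _) hcover
  obtain ⟨x, hx, hbx⟩ := Ordinal.exists_lt_omega_one_forall_le hs b hb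
  obtain ⟨i, hi, hxi⟩ := mem_iUnion₂.1 (hs_cover.ge (mem_univ ⟨⟨x, hx.le⟩, hx.ne⟩))
  exact (hbx i hi).not_gt hxi
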